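/- arXiv:1209.6504 — 2 statements merged into one kernel-verified Lean document; each statement's English description precedes it below -/
import Mathlib

section
/- Let P be a skew product on I×I with (C,ρ)-contracting fibers, and let μ̃ be a Borel probability measure on I×I. If (x,y₁) belongs to the basin of μ̃ (for the discrete-time system generated by P), then (x,y₂) belongs to the basin of μ̃ for every y₂ ∈ I; that is, the basin of μ̃ is a union of vertical fibers {x}×I. -/
open MeasureTheory Set Filter Topology

noncomputable section

/-- The interval `I = [-1/2, 1/2] ⊆ ℝ`. -/
abbrev Iv : Set ℝ := Set.Icc (-(1 / 2)) (1 / 2)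

instance : Nonempty Iv := ⟨⟨0, by norm_num⟩⟩

/-- The square `Σ = I × I`. -/
abbrev Sq : Type := Iv × Iv

/-- The basin of a Borel probability measure `μ` for the discrete-time system generated by
`T`: the set of points whose Birkhoff averages of every continuous observable converge to the
space average. -/
def basin (T : Sq → Sq) (μ : Measure Sq) : Set Sq :=
  {ξ | ∀ φ : Sq → ℝ, Continuous φ →
    Tendsto (fun n : ℕ => (1 / (n : ℝ)) * ∑ j ∈ Finset.range n, φ (T^[j] ξ))
      atTop (nhds (∫ p, φ p ∂μ))}

/-!
Since fibres are contracted exponentially, the orbits of `(x, y₁)` and `(x, y₂)`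
are asymptotic. A continuous observable on the compact square is uniformly continuous, so its
values along the two orbits are asymptotic too, and Cesàro averaging preserves this.
-/

theorem tendsto_dist_iterate_of_le_mul_pow {α : Type*} [PseudoMetricSpace α] {F : α → α}
    {a b : α} {C ρ : ℝ} (hρ₀ : 0 ≤ ρ) (hρ₁ : ρ < 1)
    (hcontr : ∀ m : ℕ, 1 ≤ m → dist (F^[m] a) (F^[m] b) ≤ C * ρ ^ m) :
    Tendsto (fun n => dist (F^[n] a) (F^[n] b)) atTop (𝓝 0) := by
  have hbound : Tendsto (fun m : ℕ => C * ρ ^ m) atTop (𝓝 0) := by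
    simpa using (tendsto_pow_atTop_nhds_zero_of_lt_one hρ₀ hρ₁).const_mul C
  exact squeeze_zero' (.of_forall fun _ => dist_nonneg)
    ((eventually_ge_atTop 1).mono hcontr) hbound

theorem UniformContinuous.tendsto_dist_comp {α β ι : Type*} [PseudoMetricSpace α]
    [PseudoMetricSpace β] {g : α → β} (hg : UniformContinuous g) {u v : ι → α} {l : Filter ι}
    (huv : Tendsto (fun i => dist (u i) (v i)) l (𝓝 0)) :
    Tendsto (fun i => dist (g (u i)) (g (v i))) l (𝓝 0) := by
  rw [← tendsto_uniformity_iff_dist_tendsto_zero (f := fun i => (u i, v i))] at huv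
  exact tendsto_uniformity_iff_dist_tendsto_zero.1 (Tendsto.comp hg huv)

theorem tendsto_dist_birkhoffAverage_of_tendsto_dist_iterate {α E : Type*}
    [PseudoMetricSpace α] [NormedAddCommGroup E] [NormedSpace ℝ E] {f : α → α} {g : α → E}
    (hg : UniformContinuous g) {x y : α}
    (hxy : Tendsto (fun n => dist (f^[n] x) (f^[n] y)) atTop (𝓝 0)) :
    Tendsto (fun n => dist (birkhoffAverage ℝ f g n x) (birkhoffAverage ℝ f g n y))
      atTop (𝓝 0) := by
  have hcesaro := (hg.tendsto_dist_comp hxy).cesaro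
  refine squeeze_zero (fun _ => dist_nonneg) (fun n => ?_) hcesaro
  rw [inv_mul_eq_div]
  exact dist_birkhoffAverage_birkhoffAverage_le ℝ f g n x y

theorem mem_basin_iff {T : Sq → Sq} {μ : Measure Sq} {ξ : Sq} :
    ξ ∈ basin T μ ↔ ∀ φ : Sq → ℝ, Continuous φ →
      Tendsto (fun n => birkhoffAverage ℝ T φ n ξ) atTop (𝓝 (∫ p, φ p ∂μ)) := by
  simp only [basin, mem_ofPred_eq, birkhoffAverage, birkhoffSum, smul_eq_mul, one_div]

theorem mem_basin_of_tendsto_dist_iterate {T : Sq → Sq} {μ : Measure Sq} {ξ η : Sq}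
    (hξ : ξ ∈ basin T μ) (hξη : Tendsto (fun n => dist (T^[n] ξ) (T^[n] η)) atTop (𝓝 0)) :
    η ∈ basin T μ := by
  rw [mem_basin_iff] at hξ ⊢
  intro φ hφ
  exact (hξ φ hφ).congr_dist <| tendsto_dist_birkhoffAverage_of_tendsto_dist_iterate
    (CompactSpace.uniformContinuous_of_continuous hφ) hξη

theorem basin_union_of_fibers_general
    (C ρ : ℝ) (hρ₀ : 0 < ρ) (hρ₁ : ρ < 1)
    (P : Sq → Sq)
    (hcontr : ∀ (x y₁ y₂ : Iv) (m : ℕ), 1 ≤ m →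
      dist (P^[m] (x, y₁)) (P^[m] (x, y₂)) ≤ C * ρ ^ m)
    (μ : Measure Sq)
    (x y₁ : Iv) (h : (x, y₁) ∈ basin P μ) :
    ∀ y₂ : Iv, (x, y₂) ∈ basin P μ := fun y₂ =>
  mem_basin_of_tendsto_dist_iterate h <|
    tendsto_dist_iterate_of_le_mul_pow hρ₀.le hρ₁ (hcontr x y₁ y₂)

/-- The basin of any Borel probability measure for a skew product with
`(C,ρ)`-contracting fibers is a union of vertical fibers `{x} × I`. -/
theorem basin_union_of_fibers
    (C ρ : ℝ) (hC : 0 < C) (hρ₀ : 0 < ρ) (hρ₁ : ρ < 1)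
    (P : Sq → Sq) (hPmeas : Measurable P)
    (f : Iv → Iv) (g : Sq → Iv) (hfmeas : Measurable f) (hgmeas : Measurable g)
    (hskew : ∀ p : Sq, P p = (f p.1, g p))
    (hcontr : ∀ (x y₁ y₂ : Iv) (m : ℕ), 1 ≤ m →
      dist (P^[m] (x, y₁)) (P^[m] (x, y₂)) ≤ C * ρ ^ m)
    (μ : Measure Sq) [IsProbabilityMeasure μ]
    (x y₁ : Iv) (h : (x, y₁) ∈ basin P μ) :
    ∀ y₂ : Iv, (x, y₂) ∈ basin P μ :=
  basin_union_of_fibers_general C ρ hρ₀ hρ₁ P hcontr μ x y₁ h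
end
end

section
/- Let P be a skew product on I×I over a Borel map f : I → I, with (C,ρ)-contracting fibers, and let μ̄ be an f-invariant Borel probability measure on I. Let φ : I×I → ℝ be continuous, and assume that for each m ≥ 0 the functions (φ∘P^m)⁺ and (φ∘P^m)⁻ are Borel measurable. Then the two limits lim_{m→∞} ∫ (φ∘P^m)⁺ dμ̄ and lim_{m→∞} ∫ (φ∘P^m)⁻ dμ̄ both exist and are equal. -/
open MeasureTheory Set Filter Topology

noncomputable section

/-!
The integrals `a m = ∫ (φ∘P^m)⁺` and `b m = ∫ (φ∘P^m)⁻` are monotone: `P^(m+1)` maps the fibre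
over `x` into `P^m` of the fibre over `f x`, so `(φ∘P^(m+1))⁺ ≤ (φ∘P^m)⁺ ∘ f`, and integrating
against the `f`-invariant measure gives `a (m+1) ≤ a m`; dually `b` increases. Contraction of the
fibres together with uniform continuity of `φ` makes the oscillation of `φ` over `P^m` of a fibre,
hence `(φ∘P^m)⁺ - (φ∘P^m)⁻`, tend to zero, so `a m - b m → 0` by dominated convergence. A decreasing
and an increasing sequence whose difference tends to zero converge to a common limit.
-/

theorem Antitone.exists_tendsto_of_monotone_of_sub {a b : ℕ → ℝ} (ha : Antitone a)
    (hb : Monotone b) (hab : Tendsto (fun m => a m - b m) atTop (𝓝 0)) :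
    ∃ L, Tendsto a atTop (𝓝 L) ∧ Tendsto b atTop (𝓝 L) := by
  have hba : ∀ m, b m ≤ a m := fun m =>
    sub_nonneg.1 (Antitone.le_of_tendsto (fun _ _ h => sub_le_sub (ha h) (hb h)) hab m)
  have haL : Tendsto a atTop (𝓝 (⨅ m, a m)) :=
    tendsto_atTop_ciInf ha ⟨b 0, by rintro _ ⟨m, rfl⟩; exact (hb (Nat.zero_le m)).trans (hba m)⟩
  exact ⟨_, haL, by simpa using haL.sub hab⟩

theorem abs_ciSup_sub_ciInf_le {ι : Type*} [Nonempty ι] {F : ι → ℝ} {ε : ℝ}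
    (h : ∀ i j, F i ≤ F j + ε) : |(⨆ i, F i) - ⨅ i, F i| ≤ ε := by
  obtain ⟨i₀⟩ := ‹Nonempty ι›
  have hbdd : BddAbove (range F) := ⟨F i₀ + ε, by rintro _ ⟨i, rfl⟩; exact h i i₀⟩
  have hbdd' : BddBelow (range F) := ⟨F i₀ - ε, by rintro _ ⟨j, rfl⟩; linarith [h i₀ j]⟩
  rw [abs_of_nonneg (sub_nonneg.2 (ciInf_le_ciSup hbdd' hbdd)), sub_le_iff_le_add']
  exact ciSup_le fun i => sub_le_iff_le_add.1 (le_ciInf fun j => by linarith [h i j])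

theorem abs_ciSup_le {ι : Type*} [Nonempty ι] {F : ι → ℝ} {M : ℝ} (h : ∀ i, |F i| ≤ M) :
    |⨆ i, F i| ≤ M := by
  obtain ⟨i₀⟩ := ‹Nonempty ι›
  have hbdd : BddAbove (range F) := ⟨M, by rintro _ ⟨i, rfl⟩; exact (abs_le.1 (h i)).2⟩
  exact abs_le.2
    ⟨(abs_le.1 (h i₀)).1.trans (le_ciSup hbdd i₀), ciSup_le fun i => (abs_le.1 (h i)).2⟩

theorem abs_ciInf_le {ι : Type*} [Nonempty ι] {F : ι → ℝ} {M : ℝ} (h : ∀ i, |F i| ≤ M) :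
    |⨅ i, F i| ≤ M := by
  obtain ⟨i₀⟩ := ‹Nonempty ι›
  have hbdd : BddBelow (range F) := ⟨-M, by rintro _ ⟨i, rfl⟩; exact (abs_le.1 (h i)).1⟩
  exact abs_le.2
    ⟨le_ciInf fun i => (abs_le.1 (h i)).1, (ciInf_le hbdd i₀).trans (abs_le.1 (h i₀)).2⟩

section InvariantMeasure

variable {X : Type*} [MeasurableSpace X] {μ : Measure X} {f : X → X} {u : ℕ → X → ℝ}

theorem antitone_integral_of_le_comp (hf : MeasurePreserving f μ μ) (hu : ∀ m, Integrable (u m) μ)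
    (hstep : ∀ m x, u (m + 1) x ≤ u m (f x)) : Antitone fun m => ∫ x, u m x ∂μ := by
  refine antitone_nat_of_succ_le fun m => ?_
  calc ∫ x, u (m + 1) x ∂μ ≤ ∫ x, u m (f x) ∂μ :=
        integral_mono (hu (m + 1)) (hf.integrable_comp_of_integrable (hu m)) (hstep m)
    _ = ∫ x, u m x ∂μ := by
        rw [← integral_map (μ := μ) hf.measurable.aemeasurable
          (by rw [hf.map_eq]; exact (hu m).aestronglyMeasurable), hf.map_eq]

theorem monotone_integral_of_comp_le (hf : MeasurePreserving f μ μ) (hu : ∀ m, Integrable (u m) μ)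
    (hstep : ∀ m x, u m (f x) ≤ u (m + 1) x) : Monotone fun m => ∫ x, u m x ∂μ := by
  have h := antitone_integral_of_le_comp hf (fun m => (hu m).neg) fun m x => neg_le_neg (hstep m x)
  simp only [Pi.neg_apply, integral_neg] at h
  exact fun _ _ hmn => neg_le_neg_iff.1 (h hmn)

end InvariantMeasure

section Fiber

variable {X Y : Type*} (P : X × Y → X × Y) (φ : X × Y → ℝ)

/-- `(φ ∘ P^m)⁺`. -/
def fiberSup (m : ℕ) (x : X) : ℝ := ⨆ y, φ (P^[m] (x, y))

/-- `(φ ∘ P^m)⁻`. -/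
def fiberInf (m : ℕ) (x : X) : ℝ := ⨅ y, φ (P^[m] (x, y))

variable {P φ}

theorem iterate_succ_mk_of_semiconj {f : X → X} (hP : Function.Semiconj Prod.fst P f) (m : ℕ)
    (x : X) (y : Y) : P^[m + 1] (x, y) = P^[m] (f x, (P (x, y)).2) := by
  rw [Function.iterate_succ_apply, ← hP (x, y)]

variable [Nonempty Y]

theorem abs_fiberSup_le {M : ℝ} (hM : ∀ p, |φ p| ≤ M) (m : ℕ) (x : X) :
    |fiberSup P φ m x| ≤ M :=
  abs_ciSup_le fun _ => hM _

theorem abs_fiberInf_le {M : ℝ} (hM : ∀ p, |φ p| ≤ M) (m : ℕ) (x : X) :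
    |fiberInf P φ m x| ≤ M :=
  abs_ciInf_le fun _ => hM _

theorem fiberSup_succ_le {f : X → X} (hP : Function.Semiconj Prod.fst P f)
    (hφ : BddAbove (range φ)) (m : ℕ) (x : X) : fiberSup P φ (m + 1) x ≤ fiberSup P φ m (f x) :=
  ciSup_mono_of_forall_exists (hφ.mono (by rintro _ ⟨y, rfl⟩; exact mem_range_self _)) fun y =>
    ⟨(P (x, y)).2, (congrArg φ (iterate_succ_mk_of_semiconj hP m x y)).le⟩

theorem fiberInf_le_succ {f : X → X} (hP : Function.Semiconj Prod.fst P f)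
    (hφ : BddBelow (range φ)) (m : ℕ) (x : X) : fiberInf P φ m (f x) ≤ fiberInf P φ (m + 1) x :=
  ciInf_mono_of_forall_exists (hφ.mono (by rintro _ ⟨y, rfl⟩; exact mem_range_self _)) fun y =>
    ⟨(P (x, y)).2, (congrArg φ (iterate_succ_mk_of_semiconj hP m x y)).ge⟩

theorem tendsto_fiberSup_sub_fiberInf [PseudoMetricSpace X] [PseudoMetricSpace Y] {r : ℕ → ℝ}
    (hφ : UniformContinuous φ) (hr : Tendsto r atTop (𝓝 0))
    (hcontr : ∀ᶠ m in atTop, ∀ x y₁ y₂, dist (P^[m] (x, y₁)) (P^[m] (x, y₂)) ≤ r m) (x : X) :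
    Tendsto (fun m => fiberSup P φ m x - fiberInf P φ m x) atTop (𝓝 0) := by
  refine Metric.tendsto_nhds.2 fun ε hε => ?_
  obtain ⟨δ, hδ, hφδ⟩ := Metric.uniformContinuous_iff.1 hφ (ε / 2) (half_pos hε)
  filter_upwards [hcontr, hr.eventually (gt_mem_nhds hδ)] with m hm hrm
  have hosc : ∀ y₁ y₂, φ (P^[m] (x, y₁)) ≤ φ (P^[m] (x, y₂)) + ε / 2 := fun y₁ y₂ => by
    have := hφδ ((hm x y₁ y₂).trans_lt hrm)
    rw [Real.dist_eq, abs_sub_lt_iff] at this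
    linarith
  rw [Real.dist_eq, sub_zero]
  exact (abs_ciSup_sub_ciInf_le hosc).trans_lt (half_lt_self hε)

theorem exists_tendsto_integral_fiberSup_fiberInf [MeasurableSpace X] [PseudoMetricSpace X]
    [PseudoMetricSpace Y] {f : X → X} {μ : Measure X} [IsFiniteMeasure μ] {r : ℕ → ℝ} {M : ℝ}
    (hP : Function.Semiconj Prod.fst P f) (hf : MeasurePreserving f μ μ) (hM : ∀ p, |φ p| ≤ M)
    (hφ : UniformContinuous φ) (hr : Tendsto r atTop (𝓝 0))
    (hcontr : ∀ᶠ m in atTop, ∀ x y₁ y₂, dist (P^[m] (x, y₁)) (P^[m] (x, y₂)) ≤ r m)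
    (hsup : ∀ m, AEStronglyMeasurable (fiberSup P φ m) μ)
    (hinf : ∀ m, AEStronglyMeasurable (fiberInf P φ m) μ) :
    ∃ L, Tendsto (fun m => ∫ x, fiberSup P φ m x ∂μ) atTop (𝓝 L) ∧
      Tendsto (fun m => ∫ x, fiberInf P φ m x ∂μ) atTop (𝓝 L) := by
  have hsupInt m : Integrable (fiberSup P φ m) μ :=
    .of_bound (hsup m) M (ae_of_all _ (abs_fiberSup_le hM m))
  have hinfInt m : Integrable (fiberInf P φ m) μ :=
    .of_bound (hinf m) M (ae_of_all _ (abs_fiberInf_le hM m))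
  have hgap : Tendsto (fun m => ∫ x, (fiberSup P φ m x - fiberInf P φ m x) ∂μ) atTop (𝓝 0) := by
    simpa using tendsto_integral_of_dominated_convergence (fun _ => M + M)
      (fun m => (hsup m).sub (hinf m)) (integrable_const _)
      (fun m => ae_of_all _ fun x => (abs_sub _ _).trans
        (add_le_add (abs_fiberSup_le hM m x) (abs_fiberInf_le hM m x)))
      (ae_of_all _ (tendsto_fiberSup_sub_fiberInf hφ hr hcontr))
  refine Antitone.exists_tendsto_of_monotone_of_sub
    (antitone_integral_of_le_comp hf hsupInt
      (fiberSup_succ_le hP ⟨M, by rintro _ ⟨p, rfl⟩; exact (abs_le.1 (hM p)).2⟩))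
    (monotone_integral_of_comp_le hf hinfInt
      (fiberInf_le_succ hP ⟨-M, by rintro _ ⟨p, rfl⟩; exact (abs_le.1 (hM p)).1⟩)) ?_
  simpa only [integral_sub (hsupInt _) (hinfInt _)] using hgap

end Fiber

theorem lift_limits_exist_and_agree_general
    (C ρ : ℝ) (hρ₀ : 0 < ρ) (hρ₁ : ρ < 1)
    (f : Iv → Iv) (hfmeas : Measurable f) (g : Sq → Iv)
    (P : Sq → Sq) (hskew : ∀ p : Sq, P p = (f p.1, g p))
    (hcontr : ∀ (x y₁ y₂ : Iv) (m : ℕ), 1 ≤ m →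
      dist (P^[m] (x, y₁)) (P^[m] (x, y₂)) ≤ C * ρ ^ m)
    (μ : Measure Iv) [IsProbabilityMeasure μ] (hinv : Measure.map f μ = μ)
    (φ : Sq → ℝ) (hφ : Continuous φ)
    (hmsup : ∀ m : ℕ, Measurable fun x : Iv => ⨆ y : Iv, φ (P^[m] (x, y)))
    (hminf : ∀ m : ℕ, Measurable fun x : Iv => ⨅ y : Iv, φ (P^[m] (x, y))) :
    ∃ L : ℝ,
      Tendsto (fun m : ℕ => ∫ x, (⨆ y : Iv, φ (P^[m] (x, y))) ∂μ) atTop (nhds L) ∧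
      Tendsto (fun m : ℕ => ∫ x, (⨅ y : Iv, φ (P^[m] (x, y))) ∂μ) atTop (nhds L) := by
  have : CompactSpace Iv := isCompact_iff_compactSpace.mp isCompact_Icc
  obtain ⟨M, hM⟩ := isCompact_univ.exists_bound_of_continuousOn hφ.continuousOn
  exact exists_tendsto_integral_fiberSup_fiberInf (fun p => by rw [hskew]) ⟨hfmeas, hinv⟩
    (fun p => hM p trivial) (CompactSpace.uniformContinuous_of_continuous hφ)
    (by simpa using (tendsto_pow_atTop_nhds_zero_of_lt_one hρ₀.le hρ₁).const_mul C)
    ((eventually_ge_atTop 1).mono fun m hm x y₁ y₂ => hcontr x y₁ y₂ m hm)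
    (fun m => (hmsup m).aestronglyMeasurable) (fun m => (hminf m).aestronglyMeasurable)

/-- For a skew product `P` over `f` with `(C,ρ)`-contracting fibers, an
`f`-invariant Borel probability measure `μ̄` on `I` and a continuous `φ : I×I → ℝ`, the limits
`lim_m ∫ (φ∘P^m)⁺ dμ̄` and `lim_m ∫ (φ∘P^m)⁻ dμ̄` both exist and coincide. -/
theorem lift_limits_exist_and_agree
    (C ρ : ℝ) (hC : 0 < C) (hρ₀ : 0 < ρ) (hρ₁ : ρ < 1)
    (f : Iv → Iv) (hfmeas : Measurable f) (g : Sq → Iv) (hgmeas : Measurable g)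
    (P : Sq → Sq) (hPmeas : Measurable P) (hskew : ∀ p : Sq, P p = (f p.1, g p))
    (hcontr : ∀ (x y₁ y₂ : Iv) (m : ℕ), 1 ≤ m →
      dist (P^[m] (x, y₁)) (P^[m] (x, y₂)) ≤ C * ρ ^ m)
    (μ : Measure Iv) [IsProbabilityMeasure μ] (hinv : Measure.map f μ = μ)
    (φ : Sq → ℝ) (hφ : Continuous φ)
    (hmsup : ∀ m : ℕ, Measurable fun x : Iv => ⨆ y : Iv, φ (P^[m] (x, y)))
    (hminf : ∀ m : ℕ, Measurable fun x : Iv => ⨅ y : Iv, φ (P^[m] (x, y))) :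
    ∃ L : ℝ,
      Tendsto (fun m : ℕ => ∫ x, (⨆ y : Iv, φ (P^[m] (x, y))) ∂μ) atTop (nhds L) ∧
      Tendsto (fun m : ℕ => ∫ x, (⨅ y : Iv, φ (P^[m] (x, y))) ∂μ) atTop (nhds L) :=
  lift_limits_exist_and_agree_general C ρ hρ₀ hρ₁ f hfmeas g P hskew hcontr μ hinv φ hφ hmsup hminf
end
end
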